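/- (Lemma 1) Isomorphic global types have equal trace sets: if G1 ≅ G2 then Tr(G1) = Tr(G2). -/

import Mathlib

abbrev Label := ℕ

inductive VTy
  | bool | nat
deriving DecidableEq

inductive Msg
  | val (U : VTy)
  | lab (l : Label)
deriving DecidableEq

structure Pref where
  sender : ℕ
  receiver : ℕ
  msg : Msg
deriving DecidableEq

def Pref.pid (g : Pref) : Set ℕ := {g.sender, g.receiver}

inductive Global
  | comm (g : Pref) (G : Global)
  | branch (p q : ℕ) (bs : List (Label × Global))
  | var (t : ℕ)
  | mu (t : ℕ) (G : Global)
  | gend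

namespace Global

def subst (t : ℕ) (H : Global) : Global → Global
  | comm g G => comm g (subst t H G)
  | branch p q bs => branch p q (bs.attach.map fun ⟨⟨l, G⟩, h⟩ => (l, subst t H G))
  | var s => if s = t then H else var s
  | mu s G => if s = t then mu s G else mu s (subst t H G)
  | gend => gend
decreasing_by
  all_goals simp_wf
  all_goals try (have := List.sizeOf_lt_of_mem h; simp only [Prod.mk.sizeOf_spec] at this)
  all_goals try simp only [Global.branch.sizeOf_spec, Global.mu.sizeOf_spec, Global.comm.sizeOf_spec] at *
  all_goals omega

end Global

inductive GStep : Global → Pref → Global → Prop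
  | inter (g : Pref) (G : Global) :
      GStep (.comm g G) g G
  | selbra {p q : ℕ} {bs : List (Label × Global)} {l : Label} {Gk : Global} :
      (l, Gk) ∈ bs →
      GStep (.branch p q bs) ⟨p, q, .lab l⟩ Gk
  | iperm {G G' : Global} {g g' : Pref} :
      GStep G g' G' → g.pid ∩ g'.pid = ∅ →
      GStep (.comm g G) g' (.comm g G')
  | sbperm {p q : ℕ} {bs bs' : List (Label × Global)} {g' : Pref} :
      bs.length = bs'.length →
      (∀ bb ∈ bs.zip bs', bb.1.1 = bb.2.1) →
      (∀ bb ∈ bs.zip bs', GStep bb.1.2 g' bb.2.2) →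
      g'.pid ∩ ({p, q} : Set ℕ) = ∅ →
      GStep (.branch p q bs) g' (.branch p q bs')
  | recur {t : ℕ} {G G' : Global} {g : Pref} :
      GStep (Global.subst t (.mu t G) G) g G' →
      GStep (.mu t G) g G'

inductive GSteps : Global → List Pref → Global → Prop
  | refl (G : Global) : GSteps G [] G
  | cons {G G₁ G₂ : Global} {g : Pref} {tr : List Pref} :
      GStep G g G₁ → GSteps G₁ tr G₂ → GSteps G (g :: tr) G₂

def GTraces (G : Global) : Set (List Pref) := {tr | ∃ G', GSteps G tr G'}

/-! ### Local types -/

inductive Local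
  | send (q : ℕ) (m : Msg) (T : Local)
  | recv (p : ℕ) (m : Msg) (T : Local)
  | sel (q : ℕ) (bs : List (Label × Local))
  | bra (p : ℕ) (bs : List (Label × Local))
  | var (t : ℕ)
  | mu (t : ℕ) (T : Local)
  | lend

namespace Local

def subst (t : ℕ) (H : Local) : Local → Local
  | send q m T => send q m (subst t H T)
  | recv p m T => recv p m (subst t H T)
  | sel q bs => sel q (bs.attach.map fun ⟨⟨l, T⟩, h⟩ => (l, subst t H T))
  | bra p bs => bra p (bs.attach.map fun ⟨⟨l, T⟩, h⟩ => (l, subst t H T))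
  | var s => if s = t then H else var s
  | mu s T => if s = t then mu s T else mu s (subst t H T)
  | lend => lend
decreasing_by
  all_goals simp_wf
  all_goals try (have := List.sizeOf_lt_of_mem h; simp only [Prod.mk.sizeOf_spec] at this)
  all_goals try simp only [Local.sel.sizeOf_spec, Local.bra.sizeOf_spec, Local.mu.sizeOf_spec] at *
  all_goals omega

end Local

/-- Local labels `ℓ ::= q!m | p?m`. -/
inductive LLabel
  | send (q : ℕ) (m : Msg)
  | recv (p : ℕ) (m : Msg)
deriving DecidableEq

/-- The labelled transition system over local types. -/
inductive LStep : Local → LLabel → Local → Prop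
  | send {q : ℕ} {m : Msg} {T : Local} : LStep (.send q m T) (.send q m) T
  | recv {p : ℕ} {m : Msg} {T : Local} : LStep (.recv p m T) (.recv p m) T
  | sel {q : ℕ} {bs : List (Label × Local)} {l : Label} {T : Local} :
      (l, T) ∈ bs → LStep (.sel q bs) (.send q (.lab l)) T
  | bra {p : ℕ} {bs : List (Label × Local)} {l : Label} {T : Local} :
      (l, T) ∈ bs → LStep (.bra p bs) (.recv p (.lab l)) T
  | recur {t : ℕ} {T T' : Local} {ℓ : LLabel} :
      LStep (Local.subst t (.mu t T) T) ℓ T' → LStep (.mu t T) ℓ T'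

/-- The set of labels occurring in a list of local branches. -/
def labelsOf (bs : List (Label × Local)) : Set Label := {l | ∃ T, (l, T) ∈ bs}

/-! ### Merging of local types -/

mutual
  /-- The (partial, relationally presented) merge operator `T₁ ⊔ T₂ = T₃` on local types:
  homomorphic everywhere except at branchings, which are merged by taking the union
  of branches, merging continuations of common labels. -/
  inductive Merge : Local → Local → Local → Prop
    | send {q m T₁ T₂ T₃} : Merge T₁ T₂ T₃ → Merge (.send q m T₁) (.send q m T₂) (.send q m T₃)
    | recv {p m T₁ T₂ T₃} : Merge T₁ T₂ T₃ → Merge (.recv p m T₁) (.recv p m T₂) (.recv p m T₃)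
    | sel {q bs₁ bs₂ bs₃} : MergeBs bs₁ bs₂ bs₃ → Merge (.sel q bs₁) (.sel q bs₂) (.sel q bs₃)
    | bra {p : ℕ} {bs₁ bs₂ bs₃ : List (Label × Local)} :
        labelsOf bs₃ = labelsOf bs₁ ∪ labelsOf bs₂ →
        (∀ l T₃, (l, T₃) ∈ bs₃ → MergeBranch bs₁ bs₂ l T₃) →
        Merge (.bra p bs₁) (.bra p bs₂) (.bra p bs₃)
    | var {t} : Merge (.var t) (.var t) (.var t)
    | mu {t T₁ T₂ T₃} : Merge T₁ T₂ T₃ → Merge (.mu t T₁) (.mu t T₂) (.mu t T₃)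
    | lend : Merge .lend .lend .lend

  /-- Pointwise merging of selection branches (same labels in the same order). -/
  inductive MergeBs : List (Label × Local) → List (Label × Local) → List (Label × Local) → Prop
    | nil : MergeBs [] [] []
    | cons {l T₁ T₂ T₃ bs₁ bs₂ bs₃} :
        Merge T₁ T₂ T₃ → MergeBs bs₁ bs₂ bs₃ →
        MergeBs ((l, T₁) :: bs₁) ((l, T₂) :: bs₂) ((l, T₃) :: bs₃)

  /-- How a branch `(l, T₃)` of a merged branching arises from the two merged lists. -/
  inductive MergeBranch : List (Label × Local) → List (Label × Local) → Label → Local → Prop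
    | both {bs₁ bs₂ l T₁ T₂ T₃} :
        (l, T₁) ∈ bs₁ → (l, T₂) ∈ bs₂ → Merge T₁ T₂ T₃ → MergeBranch bs₁ bs₂ l T₃
    | left {bs₁ bs₂ l T₃} :
        (l, T₃) ∈ bs₁ → l ∉ labelsOf bs₂ → MergeBranch bs₁ bs₂ l T₃
    | right {bs₁ bs₂ l T₃} :
        (l, T₃) ∈ bs₂ → l ∉ labelsOf bs₁ → MergeBranch bs₁ bs₂ l T₃
end

/-- Iterated merge `⊔ᵢ Tᵢ` of a (nonempty) family of local types. -/
inductive MergeList : List Local → Local → Prop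
  | single {T} : MergeList [T] T
  | cons {T T' T'' : Local} {Ts : List Local} :
      MergeList Ts T' → Merge T T' T'' → MergeList (T :: Ts) T''

/-! ### Projection of global types onto participants -/

/-- `Proj G r T` is the graph of the (partial) projection function `⌊G⌋r = T`. -/
inductive Proj : Global → ℕ → Local → Prop
  | comm_send {g : Pref} {G : Global} {r : ℕ} {T : Local} :
      r = g.sender → r ≠ g.receiver → Proj G r T →
      Proj (.comm g G) r (.send g.receiver g.msg T)
  | comm_recv {g : Pref} {G : Global} {r : ℕ} {T : Local} :
      r = g.receiver → r ≠ g.sender → Proj G r T →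
      Proj (.comm g G) r (.recv g.sender g.msg T)
  | comm_skip {g : Pref} {G : Global} {r : ℕ} {T : Local} :
      r ≠ g.sender → r ≠ g.receiver → Proj G r T →
      Proj (.comm g G) r T
  | branch_sel {p q : ℕ} {bs : List (Label × Global)} {bs' : List (Label × Local)} :
      p ≠ q →
      bs.length = bs'.length →
      (∀ bb ∈ bs.zip bs', bb.1.1 = bb.2.1) →
      (∀ bb ∈ bs.zip bs', Proj bb.1.2 p bb.2.2) →
      Proj (.branch p q bs) p (.sel q bs')
  | branch_bra {p q : ℕ} {bs : List (Label × Global)} {bs' : List (Label × Local)} :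
      p ≠ q →
      bs.length = bs'.length →
      (∀ bb ∈ bs.zip bs', bb.1.1 = bb.2.1) →
      (∀ bb ∈ bs.zip bs', Proj bb.1.2 q bb.2.2) →
      Proj (.branch p q bs) q (.bra p bs')
  | branch_merge {p q r : ℕ} {bs : List (Label × Global)} {Ts : List Local} {T : Local} :
      r ≠ p → r ≠ q →
      bs.length = Ts.length →
      (∀ bb ∈ bs.zip Ts, Proj bb.1.2 r bb.2) →
      MergeList Ts T →
      Proj (.branch p q bs) r T
  | mu_proj {t : ℕ} {G : Global} {r : ℕ} {T : Local} :
      Proj G r T → T ≠ .var t → Proj (.mu t G) r (.mu t T)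
  | mu_end {t : ℕ} {G : Global} {r : ℕ} :
      Proj G r (.var t) → Proj (.mu t G) r .lend
  | var {t r} : Proj (.var t) r (.var t)
  | gend {r} : Proj .gend r .lend

/-! ### Isomorphism of global types -/

/-- `Iso G₁ G₂` (`G₁ ≅ G₂`): the smallest congruence on global types containing
prefix commutativity, branching, and branching distributivity (branch index
sets are nonempty, as usual for multiparty session types). -/
inductive Iso : Global → Global → Prop
  | refl (G : Global) : Iso G G
  | symm {G G'} : Iso G G' → Iso G' G
  | trans {G G' G''} : Iso G G' → Iso G' G'' → Iso G G''
  | comm_cong {g : Pref} {G G'} : Iso G G' → Iso (.comm g G) (.comm g G')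
  | branch_cong {p q : ℕ} {bs bs' : List (Label × Global)} :
      bs.length = bs'.length →
      (∀ bb ∈ bs.zip bs', bb.1.1 = bb.2.1) →
      (∀ bb ∈ bs.zip bs', Iso bb.1.2 bb.2.2) →
      Iso (.branch p q bs) (.branch p q bs')
  | mu_cong {t : ℕ} {G G'} : Iso G G' → Iso (.mu t G) (.mu t G')
  | swap {g₁ g₂ : Pref} {G : Global} :
      g₁.pid ∩ g₂.pid = ∅ →
      Iso (.comm g₁ (.comm g₂ G)) (.comm g₂ (.comm g₁ G))
  | branching {p q : ℕ} {g : Pref} {bs : List (Label × Global)} :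
      bs ≠ [] →
      g.pid ∩ ({p, q} : Set ℕ) = ∅ →
      Iso (.branch p q (bs.map fun b => (b.1, .comm g b.2))) (.comm g (.branch p q bs))
  | distrib {p q r s : ℕ} {lsI : List Label} {bsJ : List (Label × Global)} :
      lsI ≠ [] → bsJ ≠ [] →
      ({p, q} : Set ℕ) ∩ ({r, s} : Set ℕ) = ∅ →
      Iso (.branch p q (lsI.map fun l => (l, .branch r s bsJ)))
          (.branch r s (bsJ.map fun bj => (bj.1, .branch p q (lsI.map fun l => (l, bj.2)))))

/-! ### Configurations and their synchronous semantics -/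

/-- A configuration: a family of local types, one per participant. -/
abbrev Config := ℕ → Local

/-- The synchronous transition `[Synch]` between configurations, labelled by
the communication `p → q : m` (the pair of dual local labels `q!m · p?m`). -/
inductive CStep : Config → Pref → Config → Prop
  | synch {Δ Δ' : Config} {p q : ℕ} {m : Msg} :
      p ≠ q →
      LStep (Δ p) (.send q m) (Δ' p) →
      LStep (Δ q) (.recv p m) (Δ' q) →
      (∀ r, r ≠ p → r ≠ q → Δ' r = Δ r) →
      CStep Δ ⟨p, q, m⟩ Δ'

/-- Multi-step synchronous execution of a configuration. -/
inductive CSteps : Config → List Pref → Config → Prop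
  | refl (Δ : Config) : CSteps Δ [] Δ
  | cons {Δ Δ₁ Δ₂ : Config} {g : Pref} {tr : List Pref} :
      CStep Δ g Δ₁ → CSteps Δ₁ tr Δ₂ → CSteps Δ (g :: tr) Δ₂

/-- The configuration trace set `T_S(Δ)`, identifying the synchronisation label
`q!m · p?m` with the global label `p → q : m`. -/
def CTraces (Δ : Config) : Set (List Pref) := {tr | ∃ Δ', CSteps Δ tr Δ'}

/-- Configuration traces `σ`: per-participant sequences of local labels. -/
abbrev CTrace := ℕ → List LLabel

/-- The execution relation `Δ ↝^σ_synch Δ'`, accumulating per participant the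
local labels of a sequence of `[Synch]` steps. -/
inductive Exec : Config → CTrace → Config → Prop
  | refl (Δ : Config) : Exec Δ (fun _ => []) Δ
  | step {Δ Δ₁ Δ₂ : Config} {σ : CTrace} {g : Pref} :
      Exec Δ σ Δ₁ → CStep Δ₁ g Δ₂ →
      Exec Δ
        (fun r =>
          if r = g.sender then σ r ++ [.send g.receiver g.msg]
          else if r = g.receiver then σ r ++ [.recv g.sender g.msg]
          else σ r)
        Δ₂

/-- Terminated configurations: no `[Synch]` transition is available. -/
def Terminated (Δ : Config) : Prop := ∀ g Δ', ¬ CStep Δ g Δ'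

/-- The denotation of a configuration: its set of terminated traces. -/
def Denot (Δ : Config) : Set CTrace := {σ | ∃ Δ', Exec Δ σ Δ' ∧ Terminated Δ'}

/-!
Annotate each transition with the nesting depth of the recursion unfoldings it uses. The annotated
traces of a prefix `g; G` or of a branching `p → q : {lᵢ : Gᵢ}` form a *guarded choice* of the
traces of the continuations: either every letter is independent of the guard and every
continuation performs the word, or an independent prefix performed by every continuation is
followed by a selection event and by the rest of a trace of the selected continuation. Guarded
choices with independent guards commute, and the three axioms of `≅` are instances of this law;
guarded choice also respects agreement on words of bounded total depth. Agreement up to depth `c`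
then follows by strong induction on `c` and induction on `G ≅ G'`: for `μt.G ≅ μt.G'` the first
step is a step of the unfolding at one depth less, the unfoldings are again isomorphic, and the
rest of the word is strictly shallower.
-/

/-! ### Lists -/

namespace List

variable {α β γ : Type*}

theorem exists_eq_append_cons_of_not_forall {p : α → Prop} :
    ∀ {w : List α}, ¬ (∀ x ∈ w, p x) → ∃ u x v, w = u ++ x :: v ∧ (∀ y ∈ u, p y) ∧ ¬ p x
  | [], h => absurd (fun _ hx => nomatch hx) h
  | x :: w, h => by
    by_cases hx : p x
    · obtain ⟨u, y, v, rfl, hu, hy⟩ :=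
        exists_eq_append_cons_of_not_forall (w := w) fun hw => h (forall_mem_cons.2 ⟨hx, hw⟩)
      exact ⟨x :: u, y, v, rfl, forall_mem_cons.2 ⟨hx, hu⟩, hy⟩
    · exact ⟨[], x, w, rfl, forall_mem_nil _, hx⟩

theorem forall_mem_const {l : List α} (hl : l ≠ []) {p : Prop} : (∀ _ ∈ l, p) ↔ p :=
  let ⟨_, ha⟩ := exists_mem_of_ne_nil l hl
  ⟨fun h => h _ ha, fun h _ _ => h⟩

theorem Forall₂.forall_mem_iff {R : α → β → Prop} {p : α → Prop} {q : β → Prop}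
    {l : List α} {l' : List β} (h : Forall₂ R l l') (hpq : ∀ a b, R a b → (p a ↔ q b)) :
    (∀ a ∈ l, p a) ↔ ∀ b ∈ l', q b := by
  induction h with
  | nil => simp
  | cons hab _ ih => simp [hpq _ _ hab, ih]

theorem Forall₂.exists_mem_iff {R : α → β → Prop} {p : α → Prop} {q : β → Prop}
    {l : List α} {l' : List β} (h : Forall₂ R l l') (hpq : ∀ a b, R a b → (p a ↔ q b)) :
    (∃ a ∈ l, p a) ↔ ∃ b ∈ l', q b := by
  induction h with
  | nil => simp
  | cons hab _ ih => simp [hpq _ _ hab, ih]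

theorem Forall₂.exists_of_mem_left {R : α → β → Prop} {l : List α} {l' : List β}
    (h : Forall₂ R l l') {a : α} (ha : a ∈ l) : ∃ b ∈ l', R a b := by
  induction h with
  | nil => cases ha
  | cons hab _ ih =>
    rcases mem_cons.1 ha with rfl | ha
    · exact ⟨_, mem_cons_self, hab⟩
    · obtain ⟨b, hb, hab⟩ := ih ha
      exact ⟨b, mem_cons_of_mem _ hb, hab⟩

theorem Forall₂.exists_of_mem_right {R : α → β → Prop} {l : List α} {l' : List β}
    (h : Forall₂ R l l') {b : β} (hb : b ∈ l') : ∃ a ∈ l, R a b :=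
  h.flip.exists_of_mem_left hb

theorem forall₂_relComp_iff {R : α → β → Prop} {S : β → γ → Prop} {l : List α} {l'' : List γ} :
    Forall₂ (Relation.Comp R S) l l'' ↔ ∃ l', Forall₂ R l l' ∧ Forall₂ S l' l'' := by
  constructor
  · intro h
    induction h with
    | nil => exact ⟨[], .nil, .nil⟩
    | cons hab _ ih =>
      obtain ⟨b, hab, hbc⟩ := hab
      obtain ⟨l', h₁, h₂⟩ := ih
      exact ⟨b :: l', .cons hab h₁, .cons hbc h₂⟩
  · rintro ⟨l', h₁, h₂⟩
    induction h₁ generalizing l'' with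
    | nil => cases h₂; exact .nil
    | cons hab _ ih => cases h₂ with | cons hbc h₂ => exact .cons ⟨_, hab, hbc⟩ (ih h₂)

theorem exists_forall₂_of_forall_mem {R : α → β → Prop} :
    ∀ {l : List α}, (∀ a ∈ l, ∃ b, R a b) → ∃ l', Forall₂ R l l'
  | [], _ => ⟨[], .nil⟩
  | a :: l, h => by
    obtain ⟨b, hab⟩ := h a mem_cons_self
    obtain ⟨l', hl'⟩ := exists_forall₂_of_forall_mem fun a' ha' => h a' (mem_cons_of_mem a ha')
    exact ⟨b :: l', .cons hab hl'⟩

theorem exists_forall₂_and_mem {R : α → β → Prop} {l : List α} (h : ∀ a ∈ l, ∃ b, R a b)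
    {a₀ : α} {b₀ : β} (ha₀ : a₀ ∈ l) (hb₀ : R a₀ b₀) : ∃ l', Forall₂ R l l' ∧ b₀ ∈ l' := by
  obtain ⟨l', hl'⟩ := exists_forall₂_of_forall_mem (R := fun a b => R a b ∧ (a = a₀ → b = b₀))
    fun a ha => by
      by_cases h₀ : a = a₀
      · exact ⟨b₀, h₀ ▸ hb₀, fun _ => rfl⟩
      · obtain ⟨b, hb⟩ := h a ha
        exact ⟨b, hb, fun h' => absurd h' h₀⟩
  obtain ⟨b, hb, -, hb₀⟩ := hl'.exists_of_mem_left ha₀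
  exact ⟨l', hl'.imp fun _ _ => And.left, hb₀ rfl ▸ hb⟩

end List

/-! ### Guarded choice of trace languages -/

section GuardedChoice

variable {α : Type*}

-- The trace set of a choice node: letters satisfying `P` are independent of the choice, and each
-- `a ∈ fam` is a branch with selection events `a.1` and continuation traces `a.2`.
def guardedChoice (P : α → Prop) (fam : List ((α → Prop) × Set (List α))) : Set (List α) :=
  {w | (∀ x ∈ w, P x) ∧ (∀ a ∈ fam, w ∈ a.2) ∨
    ∃ u x v, w = u ++ x :: v ∧ (∀ y ∈ u, P y) ∧ ¬ P x ∧ (∀ a ∈ fam, u ∈ a.2) ∧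
      ∃ a ∈ fam, a.1 x ∧ u ++ v ∈ a.2}

def IsPrefixClosed (S : Set (List α)) : Prop := ∀ u v, u ++ v ∈ S → u ∈ S

theorem IsPrefixClosed.preimage_cons {S : Set (List α)} (hS : IsPrefixClosed S) (x : α) :
    IsPrefixClosed (List.cons x ⁻¹' S) := fun u v h => hS (x :: u) v h

variable {P Q : α → Prop} {fam : List ((α → Prop) × Set (List α))} {x : α} {w : List α}

@[simp]
theorem nil_mem_guardedChoice : [] ∈ guardedChoice P fam ↔ ∀ a ∈ fam, [] ∈ a.2 := by
  simp [guardedChoice]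

theorem preimage_cons_guardedChoice_of_pos (hx : P x) :
    List.cons x ⁻¹' guardedChoice P fam =
      guardedChoice P (fam.map fun a => (a.1, List.cons x ⁻¹' a.2)) := by
  ext w
  simp only [guardedChoice, Set.mem_preimage, Set.mem_ofPred_eq, List.mem_map, forall_exists_index,
    and_imp, forall_apply_eq_imp_iff₂, exists_exists_and_eq_and]
  constructor
  · rintro (⟨hw, hfam⟩ | ⟨_ | ⟨z, u⟩, y, v, huv, hu, hy, hfam, hsel⟩)
    · exact .inl ⟨(List.forall_mem_cons.1 hw).2, hfam⟩
    · obtain ⟨rfl, -⟩ := List.cons_eq_cons.1 huv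
      exact absurd hx hy
    · obtain ⟨rfl, rfl⟩ := List.cons_eq_cons.1 huv
      exact .inr ⟨u, y, v, rfl, (List.forall_mem_cons.1 hu).2, hy, hfam, hsel⟩
  · rintro (⟨hw, hfam⟩ | ⟨u, y, v, rfl, hu, hy, hfam, hsel⟩)
    · exact .inl ⟨List.forall_mem_cons.2 ⟨hx, hw⟩, hfam⟩
    · exact .inr ⟨x :: u, y, v, rfl, List.forall_mem_cons.2 ⟨hx, hu⟩, hy, hfam, hsel⟩

theorem preimage_cons_guardedChoice_of_neg (hx : ¬ P x) :
    List.cons x ⁻¹' guardedChoice P fam =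
      {w | (∀ a ∈ fam, [] ∈ a.2) ∧ ∃ a ∈ fam, a.1 x ∧ w ∈ a.2} := by
  ext w
  simp only [guardedChoice, Set.mem_preimage, Set.mem_ofPred_eq]
  constructor
  · rintro (⟨hw, -⟩ | ⟨_ | ⟨z, u⟩, y, v, huv, hu, hy, hsel⟩)
    · exact absurd (hw x List.mem_cons_self) hx
    · obtain ⟨rfl, rfl⟩ := List.cons_eq_cons.1 huv
      exact hsel
    · obtain ⟨rfl, rfl⟩ := List.cons_eq_cons.1 huv
      exact absurd (hu x List.mem_cons_self) hx
  · rintro hsel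
    exact .inr ⟨[], x, w, rfl, List.forall_mem_nil _, hx, hsel⟩

theorem cons_mem_guardedChoice_of_pos (hx : P x) :
    x :: w ∈ guardedChoice P fam ↔
      w ∈ guardedChoice P (fam.map fun a => (a.1, List.cons x ⁻¹' a.2)) :=
  Set.ext_iff.1 (preimage_cons_guardedChoice_of_pos hx) w

theorem cons_mem_guardedChoice_of_neg (hx : ¬ P x) :
    x :: w ∈ guardedChoice P fam ↔ (∀ a ∈ fam, [] ∈ a.2) ∧ ∃ a ∈ fam, a.1 x ∧ w ∈ a.2 :=
  Set.ext_iff.1 (preimage_cons_guardedChoice_of_neg hx) w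

theorem cons_not_mem_guardedChoice (hx : ¬ P x) (hfam : ∀ a ∈ fam, ¬ a.1 x) :
    x :: w ∉ guardedChoice P fam := by
  rw [cons_mem_guardedChoice_of_neg hx]
  rintro ⟨-, a, ha, hax, -⟩
  exact hfam a ha hax

theorem preimage_cons_guardedChoice_const_of_neg {γ : Type*} {ls : List γ} (hls : ls ≠ [])
    {e : γ → α → Prop} {S : Set (List α)} (hx : ¬ P x) :
    List.cons x ⁻¹' guardedChoice P (ls.map fun l => (e l, S)) =
      {w | ([] ∈ S ∧ ∃ l ∈ ls, e l x) ∧ w ∈ S} := by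
  rw [preimage_cons_guardedChoice_of_neg hx]
  ext w
  simp only [Set.mem_ofPred_eq, List.mem_map, forall_exists_index, and_imp,
    forall_apply_eq_imp_iff₂, exists_exists_and_eq_and, List.forall_mem_const hls]
  constructor
  · rintro ⟨hnil, l, hl, hlx, hw⟩
    exact ⟨⟨hnil, l, hl, hlx⟩, hw⟩
  · rintro ⟨⟨hnil, l, hl, hlx⟩, hw⟩
    exact ⟨hnil, l, hl, hlx, hw⟩

theorem guardedChoice_map_setOf_and (c : (α → Prop) × Set (List α) → Prop) :
    guardedChoice P (fam.map fun a => (a.1, {w | c a ∧ w ∈ a.2})) =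
      {w | (∀ a ∈ fam, c a) ∧ w ∈ guardedChoice P fam} := by
  ext w
  simp only [guardedChoice, Set.mem_ofPred_eq, List.mem_map, forall_exists_index,
    and_imp, forall_apply_eq_imp_iff₂, exists_exists_and_eq_and, forall_and]
  constructor
  · rintro (⟨hw, hc, hfam⟩ | ⟨u, y, v, rfl, hu, hy, ⟨hc, hfam⟩, a, ha, hay, -, hav⟩)
    · exact ⟨hc, .inl ⟨hw, hfam⟩⟩
    · exact ⟨hc, .inr ⟨u, y, v, rfl, hu, hy, hfam, a, ha, hay, hav⟩⟩
  · rintro ⟨hc, ⟨hw, hfam⟩ | ⟨u, y, v, rfl, hu, hy, hfam, a, ha, hay, hav⟩⟩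
    · exact .inl ⟨hw, hc, hfam⟩
    · exact .inr ⟨u, y, v, rfl, hu, hy, ⟨hc, hfam⟩, a, ha, hay, hc a ha, hav⟩

theorem guardedChoice_const_select {γ : Type*} {ls : List γ} (hls : ls ≠ []) {e : γ → α → Prop}
    (hS : ∀ a ∈ fam, IsPrefixClosed a.2) {c : Prop} :
    guardedChoice P (ls.map fun l => (e l, {w | c ∧ ∃ a ∈ fam, a.1 x ∧ w ∈ a.2})) =
      {w | c ∧ ∃ a ∈ fam, a.1 x ∧ w ∈ guardedChoice P (ls.map fun l => (e l, a.2))} := by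
  ext w
  induction w generalizing fam with
  | nil =>
    obtain ⟨l₀, hl₀⟩ := List.exists_mem_of_ne_nil ls hls
    simp only [nil_mem_guardedChoice, List.forall_mem_map, Set.mem_ofPred_eq]
    constructor
    · intro h
      obtain ⟨hc, a, ha, hax, hnil⟩ := h l₀ hl₀
      exact ⟨hc, a, ha, hax, fun _ _ => hnil⟩
    · rintro ⟨hc, a, ha, hax, hnil⟩ l hl
      exact ⟨hc, a, ha, hax, hnil l hl⟩
  | cons y w ih =>
    by_cases hy : P y
    · have := ih (fam := fam.map fun a => (a.1, List.cons y ⁻¹' a.2))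
        (List.forall_mem_map.2 fun a ha => (hS a ha).preimage_cons y)
      simpa [cons_mem_guardedChoice_of_pos hy, List.map_map, Function.comp_def,
        Set.preimage_ofPred_eq] using this
    · simp only [Set.mem_ofPred_eq, cons_mem_guardedChoice_of_neg hy, List.mem_map,
        forall_exists_index, and_imp, forall_apply_eq_imp_iff₂, exists_exists_and_eq_and]
      constructor
      · rintro ⟨-, l, hl, hly, hc, a, ha, hax, hw⟩
        exact ⟨hc, a, ha, hax, fun _ _ => hS a ha [] w hw, l, hl, hly, hw⟩
      · rintro ⟨hc, a, ha, hax, hnil, l, hl, hly, hw⟩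
        exact ⟨fun l hl => ⟨hc, a, ha, hax, hnil l hl⟩, l, hl, hly, hc, a, ha, hax, hw⟩

theorem guardedChoice_comm {γ : Type*} {ls : List γ} {e : γ → α → Prop}
    (hls : ls ≠ []) (hfam : fam ≠ []) (heQ : ∀ l x, e l x → Q x)
    (hP : ∀ a ∈ fam, ∀ x, a.1 x → P x) (hS : ∀ a ∈ fam, IsPrefixClosed a.2) :
    guardedChoice P (ls.map fun l => (e l, guardedChoice Q fam)) =
      guardedChoice Q (fam.map fun a => (a.1, guardedChoice P (ls.map fun l => (e l, a.2)))) := by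
  ext w
  induction w generalizing fam with
  | nil =>
    simp only [nil_mem_guardedChoice, List.forall_mem_map]
    exact ⟨fun h a ha l hl => h l hl a ha, fun h l hl a ha => h a ha l hl⟩
  | cons x w ih =>
    by_cases hPx : P x <;> by_cases hQx : Q x
    · have := ih (fam := fam.map fun a => (a.1, List.cons x ⁻¹' a.2)) (by simpa using hfam)
        (List.forall_mem_map.2 hP) (List.forall_mem_map.2 fun a ha => (hS a ha).preimage_cons x)
      simpa [cons_mem_guardedChoice_of_pos hPx, cons_mem_guardedChoice_of_pos hQx,
        preimage_cons_guardedChoice_of_pos hQx, preimage_cons_guardedChoice_of_pos hPx,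
        List.map_map, Function.comp_def] using this
    · rw [cons_mem_guardedChoice_of_pos hPx, cons_mem_guardedChoice_of_neg hQx, List.map_map]
      simp only [Function.comp_def, preimage_cons_guardedChoice_of_neg hQx,
        guardedChoice_const_select hls hS]
      simp only [Set.mem_ofPred_eq, nil_mem_guardedChoice, List.mem_map, forall_exists_index,
        and_imp, forall_apply_eq_imp_iff₂, exists_exists_and_eq_and, List.forall_mem_const hls]
    · rw [cons_mem_guardedChoice_of_neg hPx, cons_mem_guardedChoice_of_pos hQx, List.map_map]
      simp only [Function.comp_def, preimage_cons_guardedChoice_const_of_neg hls hPx,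
        guardedChoice_map_setOf_and]
      simp only [Set.mem_ofPred_eq, forall_and, List.forall_mem_const hfam, List.mem_map,
        forall_exists_index, and_imp, forall_apply_eq_imp_iff₂, exists_exists_and_eq_and,
        List.forall_mem_const hls, nil_mem_guardedChoice]
      constructor
      · rintro ⟨hnil, l, hl, hlx, hw⟩
        exact ⟨⟨hnil, l, hl, hlx⟩, hw⟩
      · rintro ⟨⟨hnil, l, hl, hlx⟩, hw⟩
        exact ⟨hnil, l, hl, hlx, hw⟩
    · refine iff_of_false (cons_not_mem_guardedChoice hPx ?_) (cons_not_mem_guardedChoice hQx ?_)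
      · rintro _ hb hbx
        obtain ⟨l, -, rfl⟩ := List.mem_map.1 hb
        exact hQx (heQ l x hbx)
      · rintro _ hb hbx
        obtain ⟨a, ha, rfl⟩ := List.mem_map.1 hb
        exact hPx (hP a ha x hbx)

theorem guardedChoice_congr_on {K : Set (List α)}
    (hK : ∀ w ∈ K, ∀ v, v.Sublist w → v ∈ K) {fam fam' : List ((α → Prop) × Set (List α))}
    (h : List.Forall₂ (fun a b => a.1 = b.1 ∧ ∀ w ∈ K, w ∈ a.2 ↔ w ∈ b.2) fam fam') :
    ∀ w ∈ K, w ∈ guardedChoice P fam ↔ w ∈ guardedChoice P fam' := by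
  intro w hw
  induction w generalizing K fam fam' with
  | nil =>
    simp only [nil_mem_guardedChoice]
    exact h.forall_mem_iff fun a b hab => hab.2 [] hw
  | cons x w ih =>
    by_cases hx : P x
    · rw [cons_mem_guardedChoice_of_pos hx, cons_mem_guardedChoice_of_pos hx]
      refine ih (K := List.cons x ⁻¹' K) (fun v hv u huv => hK _ hv _ (huv.cons_cons x)) ?_ hw
      rw [List.forall₂_map_left_iff, List.forall₂_map_right_iff]
      exact h.imp fun a b hab => ⟨hab.1, fun v hv => hab.2 (x :: v) hv⟩
    · rw [cons_mem_guardedChoice_of_neg hx, cons_mem_guardedChoice_of_neg hx]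
      have hw' := hK _ hw w (List.sublist_cons_self x w)
      exact and_congr (h.forall_mem_iff fun a b hab => hab.2 [] (hK _ hw [] (List.nil_sublist _)))
        (h.exists_mem_iff fun a b hab => by rw [hab.1, hab.2 w hw'])

end GuardedChoice

/-! ### Runs of a labelled transition system -/

namespace LTS

variable {σ α : Type*} (step : σ → α → σ → Prop)

inductive Run : σ → List α → σ → Prop
  | nil (s : σ) : Run s [] s
  | cons {s s' s'' : σ} {x : α} {w : List α} : step s x s' → Run s' w s'' → Run s (x :: w) s''

def traces (s : σ) : Set (List α) := {w | ∃ s', Run step s w s'}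

variable {step}

@[simp]
theorem run_nil_iff {s s' : σ} : Run step s [] s' ↔ s' = s :=
  ⟨fun h => by cases h; rfl, fun h => by subst h; exact .nil _⟩

theorem run_cons_iff {s s'' : σ} {x : α} {w : List α} :
    Run step s (x :: w) s'' ↔ ∃ s', step s x s' ∧ Run step s' w s'' :=
  ⟨fun h => by cases h with | cons hx hw => exact ⟨_, hx, hw⟩, fun ⟨_, hx, hw⟩ => .cons hx hw⟩

theorem run_append_iff {s s'' : σ} {u v : List α} :
    Run step s (u ++ v) s'' ↔ ∃ s', Run step s u s' ∧ Run step s' v s'' := by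
  induction u generalizing s with
  | nil => simp
  | cons x u ih => simp only [List.cons_append, run_cons_iff, ih]; aesop

theorem nil_mem_traces (s : σ) : [] ∈ traces step s := ⟨s, .nil s⟩

theorem cons_mem_traces {s : σ} {x : α} {w : List α} :
    x :: w ∈ traces step s ↔ ∃ s', step s x s' ∧ w ∈ traces step s' := by
  simp only [traces, Set.mem_ofPred_eq, run_cons_iff]
  aesop

theorem append_mem_traces {s : σ} {u v : List α} :
    u ++ v ∈ traces step s ↔ ∃ s', Run step s u s' ∧ v ∈ traces step s' := by
  simp only [traces, Set.mem_ofPred_eq, run_append_iff]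
  aesop

theorem isPrefixClosed_traces (s : σ) : IsPrefixClosed (traces step s) := fun _ _ h =>
  let ⟨s', hu, _⟩ := append_mem_traces.1 h
  ⟨s', hu⟩

end LTS

/-! ### Depth-annotated traces of global types -/

-- `GStep` whose derivation nests at most `n` unfoldings `recur`.
inductive GStepN : ℕ → Global → Pref → Global → Prop
  | inter (n : ℕ) (g : Pref) (G : Global) : GStepN n (.comm g G) g G
  | selbra {n : ℕ} {p q : ℕ} {bs : List (Label × Global)} {l : Label} {Gk : Global} :
      (l, Gk) ∈ bs → GStepN n (.branch p q bs) ⟨p, q, .lab l⟩ Gk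
  | iperm {n : ℕ} {G G' : Global} {g g' : Pref} :
      GStepN n G g' G' → g.pid ∩ g'.pid = ∅ →
      GStepN n (.comm g G) g' (.comm g G')
  | sbperm {n : ℕ} {p q : ℕ} {bs bs' : List (Label × Global)} {g' : Pref} :
      bs.length = bs'.length →
      (∀ bb ∈ bs.zip bs', bb.1.1 = bb.2.1) →
      (∀ bb ∈ bs.zip bs', GStepN n bb.1.2 g' bb.2.2) →
      g'.pid ∩ ({p, q} : Set ℕ) = ∅ →
      GStepN n (.branch p q bs) g' (.branch p q bs')
  | recur {n : ℕ} {t : ℕ} {G G' : Global} {g : Pref} :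
      GStepN n (Global.subst t (.mu t G) G) g G' →
      GStepN (n + 1) (.mu t G) g G'

theorem GStepN.mono {n m : ℕ} (hnm : n ≤ m) {G G' : Global} {g : Pref} (h : GStepN n G g G') :
    GStepN m G g G' := by
  induction h generalizing m with
  | inter => exact .inter _ _ _
  | selbra hm => exact .selbra hm
  | iperm _ hd ih => exact .iperm (ih hnm) hd
  | sbperm hl hlab _ hd ih => exact .sbperm hl hlab (fun bb hb => ih bb hb hnm) hd
  | recur _ ih =>
    obtain ⟨k, rfl⟩ := Nat.exists_eq_add_of_lt hnm
    exact .recur (ih (Nat.le_add_right _ _))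

theorem gStep_iff_exists_gStepN {G G' : Global} {g : Pref} :
    GStep G g G' ↔ ∃ n, GStepN n G g G' := by
  constructor
  · intro h
    induction h with
    | inter => exact ⟨0, .inter _ _ _⟩
    | selbra hm => exact ⟨0, .selbra hm⟩
    | iperm _ hd ih =>
      obtain ⟨n, hn⟩ := ih
      exact ⟨n, .iperm hn hd⟩
    | @sbperm p q bs bs' g' hl hlab _ hd ih =>
      choose! n hn using ih
      exact ⟨((bs.zip bs').map n).sum, .sbperm hl hlab
        (fun bb hb => (hn bb hb).mono (List.le_sum_of_mem (List.mem_map_of_mem hb))) hd⟩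
    | recur _ ih =>
      obtain ⟨n, hn⟩ := ih
      exact ⟨n + 1, .recur hn⟩
  · rintro ⟨n, h⟩
    induction h with
    | inter => exact .inter _ _
    | selbra hm => exact .selbra hm
    | iperm _ hd ih => exact .iperm ih hd
    | sbperm hl hlab _ hd ih => exact .sbperm hl hlab ih hd
    | recur _ ih => exact .recur ih

def depthStep (G : Global) (x : ℕ × Pref) (G' : Global) : Prop := GStepN x.1 G x.2 G'

def depthTraces (G : Global) : Set (List (ℕ × Pref)) := LTS.traces depthStep G

theorem gSteps_iff_exists_run {G G' : Global} {tr : List Pref} :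
    GSteps G tr G' ↔ ∃ w, w.map Prod.snd = tr ∧ LTS.Run depthStep G w G' := by
  constructor
  · intro h
    induction h with
    | refl G => exact ⟨[], rfl, .nil G⟩
    | cons hst _ ih =>
      obtain ⟨n, hn⟩ := gStep_iff_exists_gStepN.1 hst
      obtain ⟨w, rfl, hw⟩ := ih
      exact ⟨(n, _) :: w, rfl, .cons hn hw⟩
  · rintro ⟨w, rfl, h⟩
    induction h with
    | nil G => exact .refl G
    | cons hx _ ih => exact .cons (gStep_iff_exists_gStepN.2 ⟨_, hx⟩) ih

theorem mem_gTraces_iff {G : Global} {tr : List Pref} :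
    tr ∈ GTraces G ↔ ∃ w ∈ depthTraces G, w.map Prod.snd = tr := by
  simp only [GTraces, depthTraces, LTS.traces, Set.mem_ofPred_eq, gSteps_iff_exists_run]
  aesop

theorem Pref.pid_inter_self_ne_empty (g : Pref) : g.pid ∩ g.pid ≠ ∅ := by
  rw [Set.inter_self]
  exact (Set.insert_nonempty _ _).ne_empty

theorem depthStep_comm_iff {g : Pref} {G Y : Global} {x : ℕ × Pref} :
    depthStep (.comm g G) x Y ↔
      x.2 = g ∧ Y = G ∨ g.pid ∩ x.2.pid = ∅ ∧ ∃ Y', Y = .comm g Y' ∧ depthStep G x Y' := by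
  obtain ⟨n, g'⟩ := x
  constructor
  · intro h
    cases h with
    | inter => exact .inl ⟨rfl, rfl⟩
    | iperm h hd => exact .inr ⟨hd, _, rfl, h⟩
  · rintro (⟨rfl, rfl⟩ | ⟨hd, Y', rfl, h⟩)
    · exact .inter _ _ _
    · exact .iperm h hd

theorem run_comm_iff_of_disjoint {g : Pref} {G X : Global} {u : List (ℕ × Pref)}
    (hu : ∀ x ∈ u, g.pid ∩ x.2.pid = ∅) :
    LTS.Run depthStep (.comm g G) u X ↔ ∃ X', X = .comm g X' ∧ LTS.Run depthStep G u X' := by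
  induction u generalizing G with
  | nil => simp
  | cons x u ih =>
    obtain ⟨hx, hu⟩ := List.forall_mem_cons.1 hu
    simp only [LTS.run_cons_iff, depthStep_comm_iff]
    constructor
    · rintro ⟨Y, ⟨hxg, -⟩ | ⟨-, Y', rfl, hY'⟩, hrun⟩
      · exact absurd (hxg ▸ hx) g.pid_inter_self_ne_empty
      · obtain ⟨X', rfl, hX'⟩ := (ih hu).1 hrun
        exact ⟨X', rfl, Y', hY', hX'⟩
    · rintro ⟨X', rfl, Y', hY', hX'⟩
      exact ⟨_, .inr ⟨hx, Y', rfl, hY'⟩, (ih hu).2 ⟨X', rfl, hX'⟩⟩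

theorem depthTraces_comm (g : Pref) (G : Global) :
    depthTraces (.comm g G) =
      guardedChoice (fun x => g.pid ∩ x.2.pid = ∅) [(fun x => x.2 = g, depthTraces G)] := by
  ext w
  simp only [guardedChoice, Set.mem_ofPred_eq, List.mem_singleton, forall_eq, exists_eq_left]
  constructor
  · rintro ⟨X, hX⟩
    by_cases hw : ∀ x ∈ w, g.pid ∩ x.2.pid = ∅
    · obtain ⟨X', -, hX'⟩ := (run_comm_iff_of_disjoint hw).1 hX
      exact .inl ⟨hw, X', hX'⟩
    · obtain ⟨u, x, v, rfl, hu, hx⟩ := List.exists_eq_append_cons_of_not_forall hw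
      obtain ⟨Y, hY, hv⟩ := LTS.run_append_iff.1 hX
      obtain ⟨Y', rfl, hY'⟩ := (run_comm_iff_of_disjoint hu).1 hY
      obtain ⟨Z, hZ, hZv⟩ := LTS.run_cons_iff.1 hv
      obtain ⟨hxg, rfl⟩ := (depthStep_comm_iff.1 hZ).resolve_right fun h => hx h.1
      exact .inr ⟨u, x, v, rfl, hu, hx, ⟨_, hY'⟩, hxg, LTS.append_mem_traces.2 ⟨_, hY', X, hZv⟩⟩
  · rintro (⟨hw, X, hX⟩ | ⟨u, x, v, rfl, hu, -, -, hxg, huv⟩)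
    · exact ⟨_, (run_comm_iff_of_disjoint hw).2 ⟨X, rfl, hX⟩⟩
    · obtain ⟨Y, hY, hv⟩ := LTS.append_mem_traces.1 huv
      exact LTS.append_mem_traces.2 ⟨_, (run_comm_iff_of_disjoint hu).2 ⟨Y, rfl, hY⟩,
        LTS.cons_mem_traces.2 ⟨Y, depthStep_comm_iff.2 (.inl ⟨hxg, rfl⟩), hv⟩⟩

theorem cons_mem_depthTraces_mu {t : ℕ} {G : Global} {x : ℕ × Pref} {w : List (ℕ × Pref)} :
    x :: w ∈ depthTraces (.mu t G) ↔
      ∃ n, x.1 = n + 1 ∧ (n, x.2) :: w ∈ depthTraces (Global.subst t (.mu t G) G) := by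
  obtain ⟨m, g⟩ := x
  simp only [depthTraces, LTS.cons_mem_traces]
  constructor
  · rintro ⟨Y, hY, hw⟩
    cases hY with
    | recur h => exact ⟨_, rfl, Y, h, hw⟩
  · rintro ⟨n, rfl, Y, hY, hw⟩
    exact ⟨Y, .recur hY, hw⟩

theorem depthStep_branch_iff {p q : ℕ} {bs : List (Label × Global)} {Y : Global} {x : ℕ × Pref} :
    depthStep (.branch p q bs) x Y ↔
      (∃ l, x.2 = ⟨p, q, .lab l⟩ ∧ (l, Y) ∈ bs) ∨
      x.2.pid ∩ {p, q} = ∅ ∧ ∃ bs', Y = .branch p q bs' ∧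
        List.Forall₂ (fun b b' => b.1 = b'.1 ∧ depthStep b.2 x b'.2) bs bs' := by
  obtain ⟨n, g⟩ := x
  constructor
  · intro h
    cases h with
    | selbra hm => exact .inl ⟨_, rfl, hm⟩
    | sbperm hl hlab hst hd =>
      exact .inr ⟨hd, _, rfl, List.forall₂_iff_zip.2 ⟨hl, fun hb => ⟨hlab _ hb, hst _ hb⟩⟩⟩
  · rintro (⟨l, rfl, hm⟩ | ⟨hd, bs', rfl, h⟩)
    · exact .selbra hm
    · obtain ⟨hl, hz⟩ := List.forall₂_iff_zip.1 h
      exact .sbperm hl (fun bb hb => (hz hb).1) (fun bb hb => (hz hb).2) hd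

theorem run_branch_iff_of_disjoint {p q : ℕ} {bs : List (Label × Global)} {X : Global}
    {u : List (ℕ × Pref)} (hu : ∀ x ∈ u, x.2.pid ∩ {p, q} = ∅) :
    LTS.Run depthStep (.branch p q bs) u X ↔
      ∃ bs', X = .branch p q bs' ∧
        List.Forall₂ (fun b b' => b.1 = b'.1 ∧ LTS.Run depthStep b.2 u b'.2) bs bs' := by
  induction u generalizing bs with
  | nil =>
    have : (fun b b' : Label × Global => b.1 = b'.1 ∧ LTS.Run depthStep b.2 [] b'.2) = (· = ·) := by
      funext b b'
      rw [Prod.ext_iff, LTS.run_nil_iff, eq_comm (a := b'.2)]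
    rw [this, List.forall₂_eq_eq_eq]
    simp
  | cons x u ih =>
    obtain ⟨hx, hu⟩ := List.forall_mem_cons.1 hu
    have hcomp : (fun b b' : Label × Global => b.1 = b'.1 ∧ LTS.Run depthStep b.2 (x :: u) b'.2) =
        Relation.Comp (fun b b' : Label × Global => b.1 = b'.1 ∧ depthStep b.2 x b'.2)
          (fun b b' : Label × Global => b.1 = b'.1 ∧ LTS.Run depthStep b.2 u b'.2) := by
      funext b b'
      simp only [LTS.run_cons_iff, Relation.Comp, eq_iff_iff]
      constructor
      · rintro ⟨h1, Y, hY, hrun⟩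
        exact ⟨(b.1, Y), ⟨rfl, hY⟩, h1, hrun⟩
      · rintro ⟨c, ⟨h1, hc⟩, h2, hrun⟩
        exact ⟨h1.trans h2, c.2, hc, hrun⟩
    rw [hcomp]
    simp only [List.forall₂_relComp_iff, LTS.run_cons_iff, depthStep_branch_iff]
    constructor
    · rintro ⟨Y, ⟨l, hl, -⟩ | ⟨-, bs₁, rfl, h₁⟩, hrun⟩
      · rw [hl] at hx
        exact absurd hx (Pref.pid_inter_self_ne_empty ⟨p, q, .lab l⟩)
      · obtain ⟨bs', rfl, h₂⟩ := (ih hu).1 hrun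
        exact ⟨bs', rfl, bs₁, h₁, h₂⟩
    · rintro ⟨bs', rfl, bs₁, h₁, h₂⟩
      exact ⟨_, .inr ⟨hx, bs₁, rfl, h₁⟩, (ih hu).2 ⟨bs', rfl, h₂⟩⟩

theorem depthTraces_branch (p q : ℕ) (bs : List (Label × Global)) :
    depthTraces (.branch p q bs) = guardedChoice (fun x => x.2.pid ∩ {p, q} = ∅)
      (bs.map fun b => (fun x => x.2 = ⟨p, q, .lab b.1⟩, depthTraces b.2)) := by
  ext w
  simp only [guardedChoice, Set.mem_ofPred_eq, List.mem_map, forall_exists_index, and_imp,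
    forall_apply_eq_imp_iff₂, exists_exists_and_eq_and]
  constructor
  · rintro ⟨X, hX⟩
    by_cases hw : ∀ x ∈ w, x.2.pid ∩ {p, q} = ∅
    · obtain ⟨bs', -, h⟩ := (run_branch_iff_of_disjoint hw).1 hX
      refine .inl ⟨hw, fun b hb => ?_⟩
      obtain ⟨b', -, -, hb'⟩ := h.exists_of_mem_left hb
      exact ⟨_, hb'⟩
    · obtain ⟨u, x, v, rfl, hu, hx⟩ := List.exists_eq_append_cons_of_not_forall hw
      obtain ⟨Y, hY, hv⟩ := LTS.run_append_iff.1 hX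
      obtain ⟨bs', rfl, h⟩ := (run_branch_iff_of_disjoint hu).1 hY
      obtain ⟨Z, hZ, hZv⟩ := LTS.run_cons_iff.1 hv
      obtain ⟨l, hxl, hlZ⟩ := (depthStep_branch_iff.1 hZ).resolve_right fun h => hx h.1
      obtain ⟨b, hb, hbl, hbZ⟩ := h.exists_of_mem_right hlZ
      refine .inr ⟨u, x, v, rfl, hu, hx, fun b hb => ?_, b, hb, hbl ▸ hxl,
        LTS.append_mem_traces.2 ⟨Z, hbZ, X, hZv⟩⟩
      obtain ⟨b', -, -, hb'⟩ := h.exists_of_mem_left hb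
      exact ⟨_, hb'⟩
  · rintro (⟨hw, hbs⟩ | ⟨u, x, v, rfl, hu, -, hbs, b, hb, hxb, huv⟩)
    · obtain ⟨bs', h⟩ := List.exists_forall₂_of_forall_mem
        (R := fun b b' : Label × Global => b.1 = b'.1 ∧ LTS.Run depthStep b.2 w b'.2)
        fun b hb => let ⟨Y, hY⟩ := hbs b hb; ⟨(b.1, Y), rfl, hY⟩
      exact ⟨_, (run_branch_iff_of_disjoint hw).2 ⟨bs', rfl, h⟩⟩
    · obtain ⟨Y, hY, hv⟩ := LTS.append_mem_traces.1 huv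
      obtain ⟨bs', h, hmem⟩ := List.exists_forall₂_and_mem
        (R := fun b b' : Label × Global => b.1 = b'.1 ∧ LTS.Run depthStep b.2 u b'.2)
        (fun b hb => let ⟨Y, hY⟩ := hbs b hb; ⟨(b.1, Y), rfl, hY⟩) hb
        (b₀ := (b.1, Y)) ⟨rfl, hY⟩
      exact LTS.append_mem_traces.2 ⟨_, (run_branch_iff_of_disjoint hu).2 ⟨bs', rfl, h⟩,
        LTS.cons_mem_traces.2 ⟨Y, depthStep_branch_iff.2 (.inl ⟨b.1, hxb, hmem⟩), hv⟩⟩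

/-! ### Isomorphism and substitution -/

theorem Global.subst_comm (t : ℕ) (H : Global) (g : Pref) (G : Global) :
    Global.subst t H (.comm g G) = .comm g (Global.subst t H G) := by
  rw [Global.subst]

theorem Global.subst_branch (t : ℕ) (H : Global) (p q : ℕ) (bs : List (Label × Global)) :
    Global.subst t H (.branch p q bs) =
      .branch p q (bs.map fun b => (b.1, Global.subst t H b.2)) := by
  rw [Global.subst]
  simpa using List.attach_map_val (f := fun b : Label × Global => (b.1, Global.subst t H b.2))

theorem Iso.branch_of_forall₂ {p q : ℕ} {bs bs' : List (Label × Global)}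
    (h : List.Forall₂ (fun b b' => b.1 = b'.1 ∧ Iso b.2 b'.2) bs bs') :
    Iso (.branch p q bs) (.branch p q bs') := by
  obtain ⟨hl, hz⟩ := List.forall₂_iff_zip.1 h
  exact .branch_cong hl (fun bb hb => (hz hb).1) (fun bb hb => (hz hb).2)

mutual

theorem Iso.subst_left {H H' : Global} (hH : Iso H H') (t : ℕ) :
    ∀ G : Global, Iso (Global.subst t H G) (Global.subst t H' G)
  | .comm g G => by
    rw [Global.subst_comm, Global.subst_comm]
    exact (Iso.subst_left hH t G).comm_cong
  | .branch p q bs => by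
    rw [Global.subst_branch, Global.subst_branch]
    exact Iso.branch_of_forall₂ (Iso.forall₂_subst_left hH t bs)
  | .var s => by
    rw [Global.subst, Global.subst]
    split_ifs
    exacts [hH, .refl _]
  | .mu s G => by
    rw [Global.subst, Global.subst]
    split_ifs
    exacts [.refl _, (Iso.subst_left hH t G).mu_cong]
  | .gend => by
    rw [Global.subst, Global.subst]
    exact .refl _

theorem Iso.forall₂_subst_left {H H' : Global} (hH : Iso H H') (t : ℕ) :
    ∀ bs : List (Label × Global), List.Forall₂ (fun b b' => b.1 = b'.1 ∧ Iso b.2 b'.2)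
      (bs.map fun b => (b.1, Global.subst t H b.2)) (bs.map fun b => (b.1, Global.subst t H' b.2))
  | [] => .nil
  | (_, G) :: bs => .cons ⟨rfl, Iso.subst_left hH t G⟩ (Iso.forall₂_subst_left hH t bs)

end

theorem Iso.subst_right {G G' : Global} (h : Iso G G') (t : ℕ) (H : Global) :
    Iso (Global.subst t H G) (Global.subst t H G') := by
  induction h with
  | refl => exact .refl _
  | symm _ ih => exact ih.symm
  | trans _ _ ih₁ ih₂ => exact ih₁.trans ih₂
  | comm_cong _ ih =>
    rw [Global.subst_comm, Global.subst_comm]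
    exact ih.comm_cong
  | branch_cong hl hlab _ ih =>
    rw [Global.subst_branch, Global.subst_branch]
    exact Iso.branch_of_forall₂ (List.forall₂_map_left_iff.2 (List.forall₂_map_right_iff.2
      (List.forall₂_iff_zip.2 ⟨hl, fun hb => ⟨hlab _ hb, ih _ hb⟩⟩)))
  | mu_cong h ih =>
    rw [Global.subst, Global.subst]
    split_ifs
    exacts [h.mu_cong, ih.mu_cong]
  | swap hd =>
    simp only [Global.subst_comm]
    exact .swap hd
  | @branching p q g bs hne hd =>
    have := Iso.branching (p := p) (q := q) (g := g)
      (bs := bs.map fun b => (b.1, Global.subst t H b.2)) (by simpa using hne) hd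
    simpa [Global.subst_branch, Global.subst_comm, Function.comp_def] using this
  | @distrib p q r s lsI bsJ hI hJ hd =>
    have := Iso.distrib (p := p) (q := q) (r := r) (s := s) (lsI := lsI)
      (bsJ := bsJ.map fun b => (b.1, Global.subst t H b.2)) hI (by simpa using hJ) hd
    simpa [Global.subst_branch, Function.comp_def] using this

theorem Iso.subst_mu_self {t : ℕ} {G G' : Global} (h : Iso G G') :
    Iso (Global.subst t (.mu t G) G) (Global.subst t (.mu t G') G') :=
  (h.subst_right t _).trans (h.mu_cong.subst_left t G')

/-! ### Invariance of traces under isomorphism -/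

theorem isPrefixClosed_depthTraces (G : Global) : IsPrefixClosed (depthTraces G) :=
  LTS.isPrefixClosed_traces G

theorem depthTraces_swap {g₁ g₂ : Pref} {G : Global} (hd : g₁.pid ∩ g₂.pid = ∅) :
    depthTraces (.comm g₁ (.comm g₂ G)) = depthTraces (.comm g₂ (.comm g₁ G)) := by
  have := guardedChoice_comm (ls := [()]) (e := fun _ x => x.2 = g₁)
    (P := fun x => g₁.pid ∩ x.2.pid = ∅) (Q := fun x => g₂.pid ∩ x.2.pid = ∅)
    (fam := [(fun x => x.2 = g₂, depthTraces G)]) (List.cons_ne_nil _ _) (List.cons_ne_nil _ _)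
    (fun _ x (hx : x.2 = g₁) => by rw [hx, Set.inter_comm]; exact hd)
    (List.forall_mem_singleton.2 fun x (hx : x.2 = g₂) => by rw [hx]; exact hd)
    (List.forall_mem_singleton.2 (isPrefixClosed_depthTraces G))
  simpa [depthTraces_comm] using this

theorem depthTraces_branching {p q : ℕ} {g : Pref} {bs : List (Label × Global)} (hbs : bs ≠ [])
    (hd : g.pid ∩ {p, q} = ∅) :
    depthTraces (.branch p q (bs.map fun b => (b.1, .comm g b.2))) =
      depthTraces (.comm g (.branch p q bs)) := by
  have := guardedChoice_comm (ls := [()]) (e := fun _ x => x.2 = g)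
    (P := fun x => g.pid ∩ x.2.pid = ∅) (Q := fun x => x.2.pid ∩ {p, q} = ∅)
    (fam := bs.map fun b => (fun x => x.2 = ⟨p, q, .lab b.1⟩, depthTraces b.2))
    (List.cons_ne_nil _ _) (by simpa using hbs)
    (fun _ x (hx : x.2 = g) => by rw [hx]; exact hd)
    (List.forall_mem_map.2 fun _ _ x (hx : x.2 = _) => by rw [hx]; exact hd)
    (List.forall_mem_map.2 fun b _ => isPrefixClosed_depthTraces b.2)
  simpa [depthTraces_comm, depthTraces_branch, Function.comp_def] using this.symm

theorem depthTraces_distrib {p q r s : ℕ} {lsI : List Label} {bsJ : List (Label × Global)}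
    (hI : lsI ≠ []) (hJ : bsJ ≠ []) (hd : ({p, q} : Set ℕ) ∩ {r, s} = ∅) :
    depthTraces (.branch p q (lsI.map fun l => (l, .branch r s bsJ))) =
      depthTraces (.branch r s (bsJ.map fun bj =>
        (bj.1, .branch p q (lsI.map fun l => (l, bj.2))))) := by
  have := guardedChoice_comm (ls := lsI) (e := fun l x => x.2 = ⟨p, q, .lab l⟩)
    (P := fun x => x.2.pid ∩ {p, q} = ∅) (Q := fun x => x.2.pid ∩ {r, s} = ∅)
    (fam := bsJ.map fun b => (fun x => x.2 = ⟨r, s, .lab b.1⟩, depthTraces b.2))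
    hI (by simpa using hJ)
    (fun _ x (hx : x.2 = _) => by rw [hx]; exact hd)
    (List.forall_mem_map.2 fun _ _ x (hx : x.2 = _) => by rw [hx, Set.inter_comm]; exact hd)
    (List.forall_mem_map.2 fun b _ => isPrefixClosed_depthTraces b.2)
  simpa [depthTraces_branch, Function.comp_def] using this

def depthAtMost (c : ℕ) : Set (List (ℕ × Pref)) := {w | (w.map Prod.fst).sum ≤ c}

theorem mem_depthAtMost {c : ℕ} {w : List (ℕ × Pref)} :
    w ∈ depthAtMost c ↔ (w.map Prod.fst).sum ≤ c :=
  Iff.rfl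

theorem depthAtMost_sublist {c : ℕ} :
    ∀ w ∈ depthAtMost c, ∀ v, v.Sublist w → v ∈ depthAtMost c :=
  fun _ hw _ hv => le_trans ((hv.map _).sum_le_sum fun _ _ => Nat.zero_le _) hw

theorem mem_depthTraces_iff_of_iso (c : ℕ) {G G' : Global} (h : Iso G G') :
    ∀ w ∈ depthAtMost c, w ∈ depthTraces G ↔ w ∈ depthTraces G' := by
  induction c using Nat.strong_induction_on generalizing G G' with
  | _ c ihc =>
  induction h with
  | refl => exact fun _ _ => .rfl
  | symm _ ih => exact fun w hw => (ih w hw).symm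
  | trans _ _ ih₁ ih₂ => exact fun w hw => (ih₁ w hw).trans (ih₂ w hw)
  | comm_cong _ ih =>
    rw [depthTraces_comm, depthTraces_comm]
    exact guardedChoice_congr_on depthAtMost_sublist (.cons ⟨rfl, ih⟩ .nil)
  | branch_cong hl hlab _ ih =>
    rw [depthTraces_branch, depthTraces_branch]
    refine guardedChoice_congr_on depthAtMost_sublist
      (List.forall₂_map_left_iff.2 (List.forall₂_map_right_iff.2 ?_))
    exact List.forall₂_iff_zip.2 ⟨hl, fun hb => ⟨by rw [hlab _ hb], ih _ hb⟩⟩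
  | mu_cong h _ =>
    rintro (_ | ⟨x, w⟩) hw
    · exact iff_of_true (LTS.nil_mem_traces _) (LTS.nil_mem_traces _)
    · simp only [cons_mem_depthTraces_mu]
      refine exists_congr fun n => and_congr_right fun hn => ?_
      refine ihc (((n, x.2) :: w).map Prod.fst).sum ?_ h.subst_mu_self _ (mem_depthAtMost.2 le_rfl)
      simp only [mem_depthAtMost, List.map_cons, List.sum_cons, hn] at hw ⊢
      omega
  | swap hd => exact fun w _ => by rw [depthTraces_swap hd]
  | branching hbs hd => exact fun w _ => by rw [depthTraces_branching hbs hd]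
  | distrib hI hJ hd => exact fun w _ => by rw [depthTraces_distrib hI hJ hd]

theorem depthTraces_eq_of_iso {G G' : Global} (h : Iso G G') : depthTraces G = depthTraces G' :=
  Set.ext fun w => mem_depthTraces_iff_of_iso (w.map Prod.fst).sum h w (mem_depthAtMost.2 le_rfl)

/-- **Lemma 1.** Isomorphic global types have equal trace sets:
if `G₁ ≅ G₂` then `Tr(G₁) = Tr(G₂)`. -/
theorem iso_preserves_traces (G₁ G₂ : Global) (h : Iso G₁ G₂) :
    GTraces G₁ = GTraces G₂ := by
  ext tr
  rw [mem_gTraces_iff, mem_gTraces_iff, depthTraces_eq_of_iso h]
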